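/- In the universal enveloping algebra U(L𝔤) of the loop algebra L𝔤 = 𝔤 ⊗ ℂ[t, t⁻¹], the following hold: [a, E₁₀⊗1] = 3(E₃₁⊗t⁻¹); [b, E₁₀⊗1] = 2(E₃₁⊗t⁻¹)(E₂₁⊗t⁻¹); [c, E₁₀⊗1] = (E₃₂⊗t⁻¹)(E₃₁⊗t⁻¹)(E₁₀⊗t⁻¹) − (E₃₁⊗t⁻¹)²(E₁₁⊗t⁻¹); [u, E₁₀⊗1] = [v, E₁₀⊗1] = [w, E₁₀⊗1] = 0; and each of the elements a, b, c, u, v, w commutes with E₀₁⊗1. -/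

import Mathlib

/-! Bracketing with `x ⊗ 1` is a derivation of `U(L𝔤)` sending `y ⊗ tⁿ` to `[y, x] ⊗ tⁿ`, so
each identity follows from the Leibniz rule and the brackets of the positive root vectors with
`E₁₀` and `E₀₁`. These are forced by the Serre relations `[E₃₁, E₁₀] = 0` and `[E₁₁, E₀₁] = 0`
through the Jacobi identity, which also makes `E₂₁, E₃₁` and `E₃₁, E₃₂` commute; that
commutativity is what cancels the remaining terms for `u` and `v`. -/

/-- The canonical embedding of a Lie algebra into its universal enveloping algebra. -/
noncomputable def ιU {L : Type*} [LieRing L] [LieAlgebra ℂ L] (x : L) :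
    UniversalEnvelopingAlgebra ℂ L :=
  UniversalEnvelopingAlgebra.ι ℂ x

/-- The adjoint action `X_L : f ↦ Xf − fX` of `X ∈ L` on `U(L)`. -/
noncomputable def adU {L : Type*} [LieRing L] [LieAlgebra ℂ L] (x : L)
    (f : UniversalEnvelopingAlgebra ℂ L) : UniversalEnvelopingAlgebra ℂ L :=
  ιU x * f - f * ιU x

/-- A Lie algebra over `ℂ` equipped with Chevalley generators of type `G₂`:
`E₁₀, F₁₀, H₁₀` correspond to the short simple root `α` and `E₀₁, F₀₁, H₀₁` to the long
simple root `β`, subject to the Chevalley relations and the Serre relations, and the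
generators generate the Lie algebra.  (By Serre's theorem such a Lie algebra is a quotient of
the simple Lie algebra of type `G₂`.) -/
structure G2Gens (L : Type*) [LieRing L] [LieAlgebra ℂ L] where
  E10 : L
  E01 : L
  F10 : L
  F01 : L
  H10 : L
  H01 : L
  hH10H01 : ⁅H10, H01⁆ = 0
  hE10F10 : ⁅E10, F10⁆ = H10
  hE01F01 : ⁅E01, F01⁆ = H01
  hE10F01 : ⁅E10, F01⁆ = 0
  hE01F10 : ⁅E01, F10⁆ = 0
  hH10E10 : ⁅H10, E10⁆ = (2 : ℂ) • E10
  hH01E01 : ⁅H01, E01⁆ = (2 : ℂ) • E01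
  hH10E01 : ⁅H10, E01⁆ = (-3 : ℂ) • E01
  hH01E10 : ⁅H01, E10⁆ = (-1 : ℂ) • E10
  hH10F10 : ⁅H10, F10⁆ = (-2 : ℂ) • F10
  hH01F01 : ⁅H01, F01⁆ = (-2 : ℂ) • F01
  hH10F01 : ⁅H10, F01⁆ = (3 : ℂ) • F01
  hH01F10 : ⁅H01, F10⁆ = (1 : ℂ) • F10
  serreE1 : ⁅E10, ⁅E10, ⁅E10, ⁅E10, E01⁆⁆⁆⁆ = 0
  serreE2 : ⁅E01, ⁅E01, E10⁆⁆ = 0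
  serreF1 : ⁅F10, ⁅F10, ⁅F10, ⁅F10, F01⁆⁆⁆⁆ = 0
  serreF2 : ⁅F01, ⁅F01, F10⁆⁆ = 0
  generates : LieSubalgebra.lieSpan ℂ L {E10, E01, F10, F01, H10, H01} = ⊤

namespace G2Gens

variable {L : Type*} [LieRing L] [LieAlgebra ℂ L] (g : G2Gens L)

/-- The root vector `E₁₁ = [E₁₀, E₀₁]`. -/
def E11 : L := ⁅g.E10, g.E01⁆
/-- The root vector `E₂₁ = (1/2)[E₁₁, E₁₀]`. -/
noncomputable def E21 : L := (2 : ℂ)⁻¹ • ⁅g.E11, g.E10⁆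
/-- The root vector `E₃₁ = (1/3)[E₂₁, E₁₀]`. -/
noncomputable def E31 : L := (3 : ℂ)⁻¹ • ⁅g.E21, g.E10⁆
/-- The root vector `E₃₂ = [E₃₁, E₀₁]`. -/
noncomputable def E32 : L := ⁅g.E31, g.E01⁆
/-- The root vector `F₁₁ = [F₀₁, F₁₀]`. -/
def F11 : L := ⁅g.F01, g.F10⁆
/-- The root vector `F₂₁ = (1/2)[F₁₀, F₁₁]`. -/
noncomputable def F21 : L := (2 : ℂ)⁻¹ • ⁅g.F10, g.F11⁆
/-- The root vector `F₃₁ = (1/3)[F₁₀, F₂₁]`. -/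
noncomputable def F31 : L := (3 : ℂ)⁻¹ • ⁅g.F10, g.F21⁆
/-- The root vector `F₃₂ = [F₀₁, F₃₁]`. -/
noncomputable def F32 : L := ⁅g.F01, g.F31⁆
/-- The coroot `H₁₁ = H₁₀ + 3H₀₁`. -/
def H11 : L := g.H10 + (3 : ℂ) • g.H01
/-- The coroot `H₂₁ = 2H₁₀ + 3H₀₁`. -/
def H21 : L := (2 : ℂ) • g.H10 + (3 : ℂ) • g.H01
/-- The coroot `H₃₁ = H₁₀ + H₀₁`. -/
def H31 : L := g.H10 + g.H01
/-- The coroot `H₃₂ = H₁₀ + 2H₀₁`. -/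
def H32 : L := g.H10 + (2 : ℂ) • g.H01

/-- The element `a = E₂₁` of `U(𝔤)`. -/
noncomputable def aU : UniversalEnvelopingAlgebra ℂ L := ιU g.E21
/-- The element `b = E₃₁E₁₁ − E₃₂E₁₀` of `U(𝔤)`. -/
noncomputable def bU : UniversalEnvelopingAlgebra ℂ L :=
  ιU g.E31 * ιU g.E11 - ιU g.E32 * ιU g.E10
/-- The element `c = E₃₁²E₀₁ − E₃₂E₃₁H₀₁ − E₃₂²F₀₁` of `U(𝔤)`. -/
noncomputable def cU : UniversalEnvelopingAlgebra ℂ L :=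
  ιU g.E31 * ιU g.E31 * ιU g.E01 - ιU g.E32 * ιU g.E31 * ιU g.H01
    - ιU g.E32 * ιU g.E32 * ιU g.F01
/-- The element `u = (1/3)a² − b` of `U(𝔤)`. -/
noncomputable def uU : UniversalEnvelopingAlgebra ℂ L :=
  (3 : ℂ)⁻¹ • (g.aU * g.aU) - g.bU
/-- The element `v = (2/9)a³ − ab − 3c` of `U(𝔤)`. -/
noncomputable def vU : UniversalEnvelopingAlgebra ℂ L :=
  ((2 : ℂ) / 9) • (g.aU * g.aU * g.aU) - g.aU * g.bU - (3 : ℂ) • g.cU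

/-- `f ≡ h (mod U(𝔤)𝔫₊)`:  `f − h` lies in the left ideal of `U(𝔤)` generated by `E₁₀`
and `E₀₁`. -/
def EqModN (f h : UniversalEnvelopingAlgebra ℂ L) : Prop :=
  ∃ A B : UniversalEnvelopingAlgebra ℂ L, f - h = A * ιU g.E10 + B * ιU g.E01

end G2Gens

open scoped TensorProduct

/-- The loop algebra `𝔤 ⊗ ℂ[t,t⁻¹]` (realised as `ℂ[t,t⁻¹] ⊗ 𝔤`) is a Lie algebra over `ℂ`. -/
noncomputable instance loopLieAlgebra {L : Type*} [LieRing L] [LieAlgebra ℂ L] :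
    LieAlgebra ℂ (LaurentPolynomial ℂ ⊗[ℂ] L) where
  lie_smul c x y := by
    have h : c • y = (algebraMap ℂ (LaurentPolynomial ℂ) c) • y :=
      algebra_compatible_smul _ c y
    rw [h, lie_smul (algebraMap ℂ (LaurentPolynomial ℂ) c) x y, ← algebra_compatible_smul]

/-- The image of `x ⊗ tⁿ` in the universal enveloping algebra of the loop algebra. -/
noncomputable def lT {L : Type*} [LieRing L] [LieAlgebra ℂ L] (n : ℤ) (x : L) :
    UniversalEnvelopingAlgebra ℂ (LaurentPolynomial ℂ ⊗[ℂ] L) :=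
  ιU ((LaurentPolynomial.T n : LaurentPolynomial ℂ) ⊗ₜ[ℂ] x)

namespace G2Gens

variable {L : Type*} [LieRing L] [LieAlgebra ℂ L] (g : G2Gens L)

/-- The element `a = E₂₁(−1)` of `U(L𝔤)`. -/
noncomputable def la : UniversalEnvelopingAlgebra ℂ (LaurentPolynomial ℂ ⊗[ℂ] L) :=
  lT (-1) g.E21
/-- The element `b = E₃₁(−1)E₁₁(−1) − E₃₂(−1)E₁₀(−1)` of `U(L𝔤)`. -/
noncomputable def lb : UniversalEnvelopingAlgebra ℂ (LaurentPolynomial ℂ ⊗[ℂ] L) :=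
  lT (-1) g.E31 * lT (-1) g.E11 - lT (-1) g.E32 * lT (-1) g.E10
/-- The element `c = E₃₁(−1)²E₀₁(−1) − E₃₂(−1)E₃₁(−1)H₀₁(−1) − E₃₂(−1)²F₀₁(−1)` of `U(L𝔤)`. -/
noncomputable def lc : UniversalEnvelopingAlgebra ℂ (LaurentPolynomial ℂ ⊗[ℂ] L) :=
  lT (-1) g.E31 * lT (-1) g.E31 * lT (-1) g.E01
    - lT (-1) g.E32 * lT (-1) g.E31 * lT (-1) g.H01
    - lT (-1) g.E32 * lT (-1) g.E32 * lT (-1) g.F01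
/-- The element `w = E₃₁(−1)E₃₂(−2) − E₃₂(−1)E₃₁(−2)` of `U(L𝔤)`. -/
noncomputable def lw : UniversalEnvelopingAlgebra ℂ (LaurentPolynomial ℂ ⊗[ℂ] L) :=
  lT (-1) g.E31 * lT (-2) g.E32 - lT (-1) g.E32 * lT (-2) g.E31
/-- The element `u = (1/3)a² − b` of `U(L𝔤)`. -/
noncomputable def lu : UniversalEnvelopingAlgebra ℂ (LaurentPolynomial ℂ ⊗[ℂ] L) :=
  (3 : ℂ)⁻¹ • (g.la * g.la) - g.lb
/-- The element `v = (2/9)a³ − ab − 3c` of `U(L𝔤)`. -/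
noncomputable def lv : UniversalEnvelopingAlgebra ℂ (LaurentPolynomial ℂ ⊗[ℂ] L) :=
  ((2 : ℂ) / 9) • (g.la * g.la * g.la) - g.la * g.lb - (3 : ℂ) • g.lc

end G2Gens

attribute [local instance] LieRing.ofAssociativeRing

theorem Ring.mul_lie {R : Type*} [Ring R] (a b x : R) :
    ⁅a * b, x⁆ = a * ⁅b, x⁆ + ⁅a, x⁆ * b := by
  simp only [Ring.lie_def]
  noncomm_ring

section Loop

variable {L : Type*} [LieRing L] [LieAlgebra ℂ L]

lemma lie_lT_lT (m n : ℤ) (x y : L) : ⁅lT m x, lT n y⁆ = lT (m + n) ⁅x, y⁆ := by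
  rw [lT, lT, lT, ιU, ιU, ιU, LaurentPolynomial.T_add, ← LieAlgebra.ExtendScalars.bracket_tmul,
    LieHom.map_lie]

lemma lie_lT_lT_zero (n : ℤ) (x y : L) : ⁅lT n x, lT 0 y⁆ = lT n ⁅x, y⁆ := by
  rw [lie_lT_lT, add_zero]

lemma lT_smul (n : ℤ) (c : ℂ) (x : L) : lT n (c • x) = c • lT n x := by
  rw [lT, lT, ιU, ιU, TensorProduct.tmul_smul, map_smul]

lemma lT_neg (n : ℤ) (x : L) : lT n (-x) = -lT n x := by
  rw [lT, lT, ιU, ιU, TensorProduct.tmul_neg, map_neg]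

lemma lT_zero (n : ℤ) : lT n (0 : L) = 0 := by
  rw [lT, ιU, TensorProduct.tmul_zero, map_zero]

lemma commute_lT_of_lie_eq_zero {x y : L} (h : ⁅x, y⁆ = 0) (m n : ℤ) :
    Commute (lT m x) (lT n y) :=
  commute_iff_lie_eq.mpr (by rw [lie_lT_lT, h, lT_zero])

end Loop

namespace G2Gens

variable {L : Type*} [LieRing L] [LieAlgebra ℂ L] (g : G2Gens L)

lemma lie_E10_E01 : ⁅g.E10, g.E01⁆ = g.E11 := rfl

lemma lie_E31_E01 : ⁅g.E31, g.E01⁆ = g.E32 := rfl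

lemma lie_E01_E10 : ⁅g.E01, g.E10⁆ = -g.E11 := by rw [← lie_skew]; rfl

lemma lie_E11_E10 : ⁅g.E11, g.E10⁆ = (2 : ℂ) • g.E21 := by rw [E21, smul_smul]; norm_num

lemma lie_E21_E10 : ⁅g.E21, g.E10⁆ = (3 : ℂ) • g.E31 := by rw [E31, smul_smul]; norm_num

lemma lie_E10_E11 : ⁅g.E10, g.E11⁆ = (-2 : ℂ) • g.E21 := by
  rw [← lie_skew, lie_E11_E10, neg_smul]

lemma lie_E10_E21 : ⁅g.E10, g.E21⁆ = (-3 : ℂ) • g.E31 := by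
  rw [← lie_skew, lie_E21_E10, neg_smul]

lemma lie_E31_E10 : ⁅g.E31, g.E10⁆ = 0 := by
  have h := g.serreE1
  rw [← E11] at h
  simp only [lie_E10_E11, lie_smul, lie_E10_E21, smul_smul, smul_eq_zero] at h
  rw [← lie_skew, h.resolve_left (by norm_num), neg_zero]

lemma lie_E11_E01 : ⁅g.E11, g.E01⁆ = 0 := by
  have h := g.serreE2
  rw [lie_E01_E10, lie_neg, neg_eq_zero] at h
  rw [← lie_skew, h, neg_zero]

lemma lie_E21_E01 : ⁅g.E21, g.E01⁆ = 0 := by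
  have h : (2 : ℂ) • ⁅g.E21, g.E01⁆ = 0 := by
    rw [← smul_lie, ← lie_E11_E10, lie_lie, ← E11, lie_self, lie_E11_E01, lie_zero, sub_zero]
  exact (smul_eq_zero.mp h).resolve_left two_ne_zero

lemma lie_E21_E11 : ⁅g.E21, g.E11⁆ = (3 : ℂ) • g.E32 := by
  rw [E11, leibniz_lie, lie_E21_E10, smul_lie, ← E32, lie_E21_E01, lie_zero, add_zero]

lemma lie_E31_E11_eq_lie_E10_E32 : ⁅g.E31, g.E11⁆ = ⁅g.E10, g.E32⁆ := by
  rw [E11, leibniz_lie, lie_E31_E10, zero_lie, zero_add, ← E32]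

lemma lie_E10_E32 : ⁅g.E10, g.E32⁆ = 0 := by
  have h : (3 : ℂ) • ⁅g.E31, g.E11⁆ = -((3 : ℂ) • ⁅g.E10, g.E32⁆) := by
    rw [← smul_lie, ← lie_E21_E10, lie_lie, lie_E10_E11, lie_smul, lie_self, smul_zero, zero_sub,
      lie_E21_E11, lie_smul]
  rw [lie_E31_E11_eq_lie_E10_E32] at h
  have h6 : (6 : ℂ) • ⁅g.E10, g.E32⁆ = 0 := by linear_combination (norm := module) h
  exact (smul_eq_zero.mp h6).resolve_left (by norm_num)

lemma lie_E32_E10 : ⁅g.E32, g.E10⁆ = 0 := by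
  rw [← lie_skew, lie_E10_E32, neg_zero]

lemma lie_E31_E11 : ⁅g.E31, g.E11⁆ = 0 := by
  rw [lie_E31_E11_eq_lie_E10_E32, lie_E10_E32]

lemma lie_E31_E21 : ⁅g.E31, g.E21⁆ = 0 := by
  have h : (2 : ℂ) • ⁅g.E31, g.E21⁆ = 0 := by
    rw [← lie_smul, ← lie_E11_E10, leibniz_lie, lie_E31_E11, zero_lie, lie_E31_E10, lie_zero,
      add_zero]
  exact (smul_eq_zero.mp h).resolve_left two_ne_zero

lemma lie_E32_E01 : ⁅g.E32, g.E01⁆ = 0 := by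
  have h : (3 : ℂ) • ⁅g.E32, g.E01⁆ = 0 := by
    rw [← smul_lie, ← lie_E21_E11, lie_lie, lie_E11_E01, lie_zero, lie_E21_E01, lie_zero,
      sub_zero]
  exact (smul_eq_zero.mp h).resolve_left three_ne_zero

lemma lie_E31_E32 : ⁅g.E31, g.E32⁆ = 0 := by
  have h : (3 : ℂ) • ⁅g.E31, g.E32⁆ = 0 := by
    rw [← lie_smul, ← lie_E21_E11, leibniz_lie, lie_E31_E21, zero_lie, lie_E31_E11, lie_zero,
      add_zero]
  exact (smul_eq_zero.mp h).resolve_left three_ne_zero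

lemma lie_F01_E10 : ⁅g.F01, g.E10⁆ = 0 := by
  rw [← lie_skew, g.hE10F01, neg_zero]

lemma lie_F01_E01 : ⁅g.F01, g.E01⁆ = -g.H01 := by
  rw [← lie_skew, g.hE01F01]

lemma lie_la_E10 : ⁅g.la, lT 0 g.E10⁆ = (3 : ℂ) • lT (-1) g.E31 := by
  rw [la, lie_lT_lT_zero, lie_E21_E10, lT_smul]

lemma lie_lb_E10 : ⁅g.lb, lT 0 g.E10⁆ = (2 : ℂ) • (lT (-1) g.E31 * g.la) := by
  simp only [lb, la, sub_lie, Ring.mul_lie, lie_lT_lT_zero, lie_E31_E10, lie_E11_E10, lie_E32_E10,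
    lie_self, lT_smul, lT_zero, mul_smul_comm, mul_zero, zero_mul, add_zero, sub_zero]

lemma lie_lc_E10 : ⁅g.lc, lT 0 g.E10⁆ =
    lT (-1) g.E32 * lT (-1) g.E31 * lT (-1) g.E10
      - lT (-1) g.E31 * lT (-1) g.E31 * lT (-1) g.E11 := by
  simp only [lc, sub_lie, Ring.mul_lie, lie_lT_lT_zero, lie_E31_E10, lie_E32_E10, lie_E01_E10,
    g.hH01E10, lie_F01_E10, lT_smul, lT_zero, lT_neg, mul_zero, zero_mul, add_zero, mul_neg,
    mul_smul_comm]
  module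

lemma commute_la_E31 : Commute g.la (lT (-1) g.E31) :=
  commute_lT_of_lie_eq_zero (by rw [← lie_skew, lie_E31_E21, neg_zero]) _ _

lemma lie_lu_E10 : ⁅g.lu, lT 0 g.E10⁆ = 0 := by
  rw [lu, sub_lie, smul_lie, Ring.mul_lie, lie_la_E10, lie_lb_E10, mul_smul_comm, smul_mul_assoc,
    g.commute_la_E31.eq]
  match_scalars
  ring

lemma lie_lv_E10 : ⁅g.lv, lT 0 g.E10⁆ = 0 := by
  have h3132 := commute_lT_of_lie_eq_zero g.lie_E31_E32 (-1) (-1)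
  rw [lv, sub_lie, sub_lie, smul_lie, smul_lie, Ring.mul_lie, Ring.mul_lie, Ring.mul_lie,
    lie_la_E10, lie_lb_E10, lie_lc_E10]
  simp only [lb, add_mul, mul_sub, mul_smul_comm, smul_mul_assoc, mul_assoc,
    g.commute_la_E31.eq, g.commute_la_E31.left_comm, h3132.left_comm]
  module

lemma commute_lw_E10 : Commute g.lw (lT 0 g.E10) := by
  have h31 (n : ℤ) := commute_lT_of_lie_eq_zero g.lie_E31_E10 n 0
  have h32 (n : ℤ) := commute_lT_of_lie_eq_zero g.lie_E32_E10 n 0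
  exact ((h31 _).mul_left (h32 _)).sub_left ((h32 _).mul_left (h31 _))

lemma commute_la_E01 : Commute g.la (lT 0 g.E01) :=
  commute_lT_of_lie_eq_zero g.lie_E21_E01 _ _

lemma commute_lb_E01 : Commute g.lb (lT 0 g.E01) := by
  rw [commute_iff_lie_eq]
  simp only [lb, sub_lie, Ring.mul_lie, lie_lT_lT_zero, lie_E31_E01, lie_E11_E01, lie_E32_E01,
    lie_E10_E01, lT_zero, mul_zero, zero_mul, zero_add, add_zero, sub_self]

lemma commute_lc_E01 : Commute g.lc (lT 0 g.E01) := by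
  rw [commute_iff_lie_eq]
  simp only [lc, sub_lie, Ring.mul_lie, lie_lT_lT_zero, lie_E31_E01, lie_E32_E01, lie_self,
    g.hH01E01, lie_F01_E01, lT_smul, lT_zero, lT_neg, mul_zero, zero_mul, zero_add,
    mul_neg, mul_add, mul_assoc, mul_smul_comm,
    (commute_lT_of_lie_eq_zero g.lie_E31_E32 (-1) (-1)).left_comm]
  module

lemma commute_lu_E01 : Commute g.lu (lT 0 g.E01) :=
  ((g.commute_la_E01.mul_left g.commute_la_E01).smul_left _).sub_left g.commute_lb_E01

lemma commute_lv_E01 : Commute g.lv (lT 0 g.E01) :=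
  ((((g.commute_la_E01.mul_left g.commute_la_E01).mul_left g.commute_la_E01).smul_left _).sub_left
    (g.commute_la_E01.mul_left g.commute_lb_E01)).sub_left (g.commute_lc_E01.smul_left _)

lemma commute_lw_E01 : Commute g.lw (lT 0 g.E01) := by
  rw [commute_iff_lie_eq]
  simp only [lw, sub_lie, Ring.mul_lie, lie_lT_lT_zero, lie_E31_E01, lie_E32_E01, lT_zero,
    mul_zero, zero_mul, add_zero, zero_add, sub_self]

/-- **Lemma A.1 (lem-commute).**  Commutators in `U(L𝔤)` of `a, b, c, u, v, w` with
`E₁₀ ⊗ 1` and `E₀₁ ⊗ 1`. -/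
theorem loop_commutator_identities :
    g.la * lT 0 g.E10 - lT 0 g.E10 * g.la = (3 : ℂ) • lT (-1) g.E31 ∧
    g.lb * lT 0 g.E10 - lT 0 g.E10 * g.lb = (2 : ℂ) • (lT (-1) g.E31 * lT (-1) g.E21) ∧
    g.lc * lT 0 g.E10 - lT 0 g.E10 * g.lc =
      lT (-1) g.E32 * lT (-1) g.E31 * lT (-1) g.E10
        - lT (-1) g.E31 * lT (-1) g.E31 * lT (-1) g.E11 ∧
    g.lu * lT 0 g.E10 - lT 0 g.E10 * g.lu = 0 ∧
    g.lv * lT 0 g.E10 - lT 0 g.E10 * g.lv = 0 ∧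
    g.lw * lT 0 g.E10 - lT 0 g.E10 * g.lw = 0 ∧
    g.la * lT 0 g.E01 = lT 0 g.E01 * g.la ∧
    g.lb * lT 0 g.E01 = lT 0 g.E01 * g.lb ∧
    g.lc * lT 0 g.E01 = lT 0 g.E01 * g.lc ∧
    g.lu * lT 0 g.E01 = lT 0 g.E01 * g.lu ∧
    g.lv * lT 0 g.E01 = lT 0 g.E01 * g.lv ∧
    g.lw * lT 0 g.E01 = lT 0 g.E01 * g.lw :=
  ⟨g.lie_la_E10, g.lie_lb_E10, g.lie_lc_E10, g.lie_lu_E10, g.lie_lv_E10,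
    sub_eq_zero.mpr g.commute_lw_E10, g.commute_la_E01, g.commute_lb_E01, g.commute_lc_E01,
    g.commute_lu_E01, g.commute_lv_E01, g.commute_lw_E01⟩

end G2Gens
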